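/- arXiv:2509.20221 — 4 statements merged into one kernel-verified Lean document; each statement's English description precedes it below -/
import Mathlib

section
/- Let P̃₁, P̃₂ be random probability measures on X and let Z be a random variable defined on the same probability space. Then the kernel covariance satisfies the law of total covariance: Cov_k(P̃₁,P̃₂) = E_Z[Cov_k(P̃₁,P̃₂ | Z)] + Cov_k(E[P̃₁ | Z], E[P̃₂ | Z]), where Cov_k(·,· | Z) denotes the kernel covariance computed under the conditional law given Z, and E[P̃ᵢ | Z] denotes the conditional mean measure. -/
open MeasureTheory ProbabilityTheory Filter
open scoped RealInnerProductSpace ENNReal NNReal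

noncomputable section

/-- A positive-definite function `k`. -/
def IsPosDef {X : Type*} (k : X → X → ℝ) : Prop :=
  ∀ (n : ℕ) (x : Fin n → X) (c : Fin n → ℝ),
    0 ≤ ∑ i : Fin n, ∑ j : Fin n, c i * c j * k (x i) (x j)

/-- A bounded, measurable, symmetric, positive-definite kernel. -/
structure IsKernel {X : Type*} [MeasurableSpace X] (k : X → X → ℝ) : Prop where
  measurable : Measurable (Function.uncurry k)
  bounded : ∃ C : ℝ, ∀ x y, |k x y| ≤ C
  symm : ∀ x y, k x y = k y x
  posDef : IsPosDef k

/-- A realization of the reproducing kernel Hilbert space of `k`: a Hilbert space together with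
a feature map reproducing `k` whose feature vectors span a dense subspace. -/
structure FeatureMap {X : Type*} [MeasurableSpace X] (k : X → X → ℝ)
    (H : Type*) [NormedAddCommGroup H] [InnerProductSpace ℝ H] : Type _ where
  toFun : X → H
  stronglyMeasurable : StronglyMeasurable toFun
  repro : ∀ x y, ⟪toFun x, toFun y⟫ = k x y
  dense_span : Dense (Submodule.span ℝ (Set.range toFun) : Set H)

/-- Kernel mean embedding of a measure, as a Bochner integral of the feature map. -/
def meanEmb {X : Type*} [MeasurableSpace X] {k : X → X → ℝ} {H : Type*}
    [NormedAddCommGroup H] [InnerProductSpace ℝ H] [CompleteSpace H]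
    (F : FeatureMap k H) (μ : Measure X) : H :=
  ∫ x, F.toFun x ∂μ

/-- Kernel covariance of two random probability measures,
`Cov_k(P₁,P₂) = E[⟪μ_k(P₁) - E[μ_k(P₁)], μ_k(P₂) - E[μ_k(P₂)]⟫]`. -/
def kerCov {X : Type*} [MeasurableSpace X] {k : X → X → ℝ} {H : Type*}
    [NormedAddCommGroup H] [InnerProductSpace ℝ H] [CompleteSpace H]
    {Ω : Type*} [MeasurableSpace Ω]
    (F : FeatureMap k H) (Pr : Measure Ω) (P₁ P₂ : Ω → Measure X) : ℝ :=
  ∫ ω, ⟪meanEmb F (P₁ ω) - ∫ ω', meanEmb F (P₁ ω') ∂Pr,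
        meanEmb F (P₂ ω) - ∫ ω', meanEmb F (P₂ ω') ∂Pr⟫ ∂Pr

/-- Kernel variance of a random probability measure. -/
def kerVar {X : Type*} [MeasurableSpace X] {k : X → X → ℝ} {H : Type*}
    [NormedAddCommGroup H] [InnerProductSpace ℝ H] [CompleteSpace H]
    {Ω : Type*} [MeasurableSpace Ω]
    (F : FeatureMap k H) (Pr : Measure Ω) (P : Ω → Measure X) : ℝ :=
  kerCov F Pr P P

/-- Kernel correlation of two random probability measures. -/
def kerCorr {X : Type*} [MeasurableSpace X] {k : X → X → ℝ} {H : Type*}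
    [NormedAddCommGroup H] [InnerProductSpace ℝ H] [CompleteSpace H]
    {Ω : Type*} [MeasurableSpace Ω]
    (F : FeatureMap k H) (Pr : Measure Ω) (P₁ P₂ : Ω → Measure X) : ℝ :=
  kerCov F Pr P₁ P₂ / (Real.sqrt (kerVar F Pr P₁) * Real.sqrt (kerVar F Pr P₂))

/-- Covariance of two real random variables. -/
def rCov {Ω : Type*} [MeasurableSpace Ω] (Pr : Measure Ω) (U V : Ω → ℝ) : ℝ :=
  ∫ ω, (U ω - ∫ ω', U ω' ∂Pr) * (V ω - ∫ ω', V ω' ∂Pr) ∂Pr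

/-- Variance of a real random variable. -/
def rVar {Ω : Type*} [MeasurableSpace Ω] (Pr : Measure Ω) (U : Ω → ℝ) : ℝ :=
  rCov Pr U U

/-- Pearson correlation of two real random variables. -/
def rCorr {Ω : Type*} [MeasurableSpace Ω] (Pr : Measure Ω) (U V : Ω → ℝ) : ℝ :=
  rCov Pr U V / (Real.sqrt (rVar Pr U) * Real.sqrt (rVar Pr V))

end

/-!
Disintegrate `Pr` as the mixture `κ ∘ₘ law(Z)`. Centring `f`, `g` at their global means `m₁`, `m₂`
gives, under each conditional law, `E_{κ s}⟪f - m₁, g - m₂⟫ = Cov_{κ s}(f, g) + ⟪E_{κ s} f - m₁, E_{κ s} g - m₂⟫`, and averaging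
over `s` turns the left side into the total covariance and the last term into the covariance of
the conditional means, whose average is again `m₁`, `m₂`. Finally the mean embedding commutes
with mixtures, so the conditional means of the embeddings are the embeddings of `E[P̃ᵢ | Z]`.
-/

noncomputable section

section Integration

variable {Ω S E : Type*} [MeasurableSpace Ω] [MeasurableSpace S]
  [NormedAddCommGroup E] [NormedSpace ℝ E]

lemma norm_integral_le_of_forall_norm_le (μ : Measure Ω) [IsProbabilityMeasure μ] {f : Ω → E}
    {C : ℝ} (h : ∀ ω, ‖f ω‖ ≤ C) : ‖∫ ω, f ω ∂μ‖ ≤ C := by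
  simpa using norm_integral_le_of_norm_le_const (μ := μ) (ae_of_all _ h)

lemma integral_comp_measure (κ : Kernel S Ω) (ν : Measure S) {f : Ω → E}
    (hf : Integrable f (κ ∘ₘ ν)) : ∫ ω, f ω ∂(κ ∘ₘ ν) = ∫ s, ∫ ω, f ω ∂κ s ∂ν := by
  rw [Measure.comp_eq_comp_const_apply] at hf ⊢
  rw [Kernel.integral_comp hf, Kernel.const_apply]

lemma integrable_integral_kernel_of_bound (κ : Kernel S Ω) [IsMarkovKernel κ] (ν : Measure S)
    [IsFiniteMeasure ν] {f : Ω → E} (hf : StronglyMeasurable f) {C : ℝ}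
    (hC : ∀ ω, ‖f ω‖ ≤ C) : Integrable (fun s => ∫ ω, f ω ∂κ s) ν :=
  .of_bound hf.integral_kernel.aestronglyMeasurable C
    (ae_of_all _ fun s => norm_integral_le_of_forall_norm_le (κ s) hC)

end Integration

section InnerCov

variable {Ω S H : Type*} [MeasurableSpace Ω] [MeasurableSpace S]
  [NormedAddCommGroup H] [InnerProductSpace ℝ H]

lemma norm_inner_sub_sub_le {x y a b : H} {C : ℝ} (hx : ‖x‖ ≤ C) (hy : ‖y‖ ≤ C)
    (ha : ‖a‖ ≤ C) (hb : ‖b‖ ≤ C) : ‖⟪x - a, y - b⟫‖ ≤ (C + C) * (C + C) :=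
  (norm_inner_le_norm _ _).trans <| mul_le_mul (norm_sub_le_of_le hx ha)
    (norm_sub_le_of_le hy hb) (norm_nonneg _) (by linarith [norm_nonneg x])

variable [CompleteSpace H]

def innerCov (μ : Measure Ω) (f g : Ω → H) : ℝ :=
  ∫ ω, ⟪f ω - ∫ ω', f ω' ∂μ, g ω - ∫ ω', g ω' ∂μ⟫ ∂μ

lemma integral_inner_sub_sub (μ : Measure Ω) [IsProbabilityMeasure μ] {f g : Ω → H}
    (hf : Integrable f μ) (hg : Integrable g μ) (hfg : Integrable (fun ω => ⟪f ω, g ω⟫) μ)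
    (a b : H) :
    ∫ ω, ⟪f ω - a, g ω - b⟫ ∂μ
      = ∫ ω, ⟪f ω, g ω⟫ ∂μ - ⟪∫ ω, f ω ∂μ, b⟫ - ⟪a, ∫ ω, g ω ∂μ⟫ + ⟪a, b⟫ := by
  have hexpand ω : ⟪f ω - a, g ω - b⟫ = ⟪f ω, g ω⟫ - ⟪f ω, b⟫ - ⟪a, g ω⟫ + ⟪a, b⟫ := by
    simp only [inner_sub_left, inner_sub_right]
    ring
  have hfb : ∫ ω, ⟪f ω, b⟫ ∂μ = ⟪∫ ω, f ω ∂μ, b⟫ := by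
    simp_rw [real_inner_comm b]
    exact integral_inner hf b
  have h₁ : Integrable (fun ω => ⟪f ω, g ω⟫ - ⟪f ω, b⟫) μ := hfg.sub (hf.inner_const b)
  have h₂ : Integrable (fun ω => ⟪f ω, g ω⟫ - ⟪f ω, b⟫ - ⟪a, g ω⟫) μ :=
    h₁.sub (hg.const_inner a)
  simp_rw [hexpand]
  rw [integral_add h₂ (integrable_const _), integral_sub h₁ (hg.const_inner a),
    integral_sub hfg (hf.inner_const b), integral_inner hg, hfb, integral_const, probReal_univ,
    one_smul]

lemma integral_inner_sub_sub_eq_innerCov_add (μ : Measure Ω) [IsProbabilityMeasure μ]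
    {f g : Ω → H} (hf : Integrable f μ) (hg : Integrable g μ)
    (hfg : Integrable (fun ω => ⟪f ω, g ω⟫) μ) (a b : H) :
    ∫ ω, ⟪f ω - a, g ω - b⟫ ∂μ
      = innerCov μ f g + ⟪∫ ω, f ω ∂μ - a, ∫ ω, g ω ∂μ - b⟫ := by
  rw [innerCov, integral_inner_sub_sub μ hf hg hfg, integral_inner_sub_sub μ hf hg hfg]
  simp only [inner_sub_left, inner_sub_right]
  ring

lemma integral_inner_sub_sub_eq_innerCov_add_of_bound (μ : Measure Ω) [IsProbabilityMeasure μ]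
    {f g : Ω → H} (hf : StronglyMeasurable f) (hg : StronglyMeasurable g) {C : ℝ}
    (hfC : ∀ ω, ‖f ω‖ ≤ C) (hgC : ∀ ω, ‖g ω‖ ≤ C) (a b : H) :
    ∫ ω, ⟪f ω - a, g ω - b⟫ ∂μ
      = innerCov μ f g + ⟪∫ ω, f ω ∂μ - a, ∫ ω, g ω ∂μ - b⟫ :=
  integral_inner_sub_sub_eq_innerCov_add μ (.of_bound hf.aestronglyMeasurable C (ae_of_all _ hfC))
    (.of_bound hg.aestronglyMeasurable C (ae_of_all _ hgC))
    (.of_bound (hf.inner hg).aestronglyMeasurable (C * C) (ae_of_all _ fun ω =>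
      (norm_inner_le_norm _ _).trans (mul_le_mul (hfC ω) (hgC ω) (norm_nonneg _)
        ((norm_nonneg _).trans (hfC ω))))) a b

theorem innerCov_comp (κ : Kernel S Ω) [IsMarkovKernel κ] (ν : Measure S)
    [IsProbabilityMeasure ν] {f g : Ω → H} (hf : StronglyMeasurable f)
    (hg : StronglyMeasurable g) {C : ℝ} (hfC : ∀ ω, ‖f ω‖ ≤ C) (hgC : ∀ ω, ‖g ω‖ ≤ C) :
    innerCov (κ ∘ₘ ν) f g
      = ∫ s, innerCov (κ s) f g ∂ν
        + innerCov ν (fun s => ∫ ω, f ω ∂κ s) (fun s => ∫ ω, g ω ∂κ s) := by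
  set fb : S → H := fun s => ∫ ω, f ω ∂κ s
  set gb : S → H := fun s => ∫ ω, g ω ∂κ s
  set m₁ := ∫ ω, f ω ∂(κ ∘ₘ ν)
  set m₂ := ∫ ω, g ω ∂(κ ∘ₘ ν)
  have hm₁ : m₁ = ∫ s, fb s ∂ν :=
    integral_comp_measure κ ν (.of_bound hf.aestronglyMeasurable C (ae_of_all _ hfC))
  have hm₂ : m₂ = ∫ s, gb s ∂ν :=
    integral_comp_measure κ ν (.of_bound hg.aestronglyMeasurable C (ae_of_all _ hgC))
  have hm₁C : ‖m₁‖ ≤ C := norm_integral_le_of_forall_norm_le _ hfC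
  have hm₂C : ‖m₂‖ ≤ C := norm_integral_le_of_forall_norm_le _ hgC
  have hfbC s : ‖fb s‖ ≤ C := norm_integral_le_of_forall_norm_le _ hfC
  have hgbC s : ‖gb s‖ ≤ C := norm_integral_le_of_forall_norm_le _ hgC
  set φ : Ω → ℝ := fun ω => ⟪f ω - m₁, g ω - m₂⟫
  set ψ : S → ℝ := fun s => ⟪fb s - m₁, gb s - m₂⟫
  have hφ : StronglyMeasurable φ :=
    (hf.sub stronglyMeasurable_const).inner (hg.sub stronglyMeasurable_const)
  have hφC ω : ‖φ ω‖ ≤ (C + C) * (C + C) := norm_inner_sub_sub_le (hfC ω) (hgC ω) hm₁C hm₂C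
  have hψ : Integrable ψ ν :=
    .of_bound ((hf.integral_kernel.sub stronglyMeasurable_const).inner
      (hg.integral_kernel.sub stronglyMeasurable_const)).aestronglyMeasurable _
      (ae_of_all _ fun s => norm_inner_sub_sub_le (hfbC s) (hgbC s) hm₁C hm₂C)
  have hcond s : innerCov (κ s) f g = ∫ ω, φ ω ∂κ s - ψ s := by
    rw [integral_inner_sub_sub_eq_innerCov_add_of_bound (κ s) hf hg hfC hgC]
    ring
  calc innerCov (κ ∘ₘ ν) f g = ∫ s, ∫ ω, φ ω ∂κ s ∂ν :=
        integral_comp_measure κ ν (.of_bound hφ.aestronglyMeasurable _ (ae_of_all _ hφC))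
    _ = ∫ s, (∫ ω, φ ω ∂κ s - ψ s) ∂ν + ∫ s, ψ s ∂ν := by
        rw [integral_sub (integrable_integral_kernel_of_bound κ ν hφ hφC) hψ, sub_add_cancel]
    _ = _ := by simp_rw [← hcond]; rw [innerCov, ← hm₁, ← hm₂]

end InnerCov

section KernelMeanEmbedding

variable {X Ω S H : Type*} [MeasurableSpace X] [MeasurableSpace Ω] [MeasurableSpace S]
  [NormedAddCommGroup H] [InnerProductSpace ℝ H] {k : X → X → ℝ}

lemma FeatureMap.norm_le_sqrt (F : FeatureMap k H) {C : ℝ} (hC : ∀ x, k x x ≤ C) (x : X) :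
    ‖F.toFun x‖ ≤ √C := by
  rw [← Real.sqrt_sq (norm_nonneg _), ← real_inner_self_eq_norm_sq, F.repro]
  exact Real.sqrt_le_sqrt (hC x)

variable [CompleteSpace H]

lemma meanEmb_comp (F : FeatureMap k H) {C : ℝ} (hF : ∀ x, ‖F.toFun x‖ ≤ C)
    (P : Kernel Ω X) [IsMarkovKernel P] (μ : Measure Ω) [IsProbabilityMeasure μ] :
    meanEmb F (P ∘ₘ μ) = ∫ ω, meanEmb F (P ω) ∂μ :=
  integral_comp_measure P μ (.of_bound F.stronglyMeasurable.aestronglyMeasurable C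
    (ae_of_all _ hF))

lemma kerCov_eq_innerCov (F : FeatureMap k H) (μ : Measure Ω) (P₁ P₂ : Ω → Measure X) :
    kerCov F μ P₁ P₂ = innerCov μ (fun ω => meanEmb F (P₁ ω)) (fun ω => meanEmb F (P₂ ω)) :=
  rfl

theorem kerCov_comp (F : FeatureMap k H) {C : ℝ} (hF : ∀ x, ‖F.toFun x‖ ≤ C)
    (P₁ P₂ : Kernel Ω X) [IsMarkovKernel P₁] [IsMarkovKernel P₂]
    (κ : Kernel S Ω) [IsMarkovKernel κ] (ν : Measure S) [IsProbabilityMeasure ν] :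
    kerCov F (κ ∘ₘ ν) P₁ P₂
      = ∫ s, kerCov F (κ s) P₁ P₂ ∂ν + kerCov F ν (fun s => P₁ ∘ₘ κ s) (fun s => P₂ ∘ₘ κ s) := by
  simp only [kerCov_eq_innerCov, meanEmb_comp F hF]
  exact innerCov_comp κ ν F.stronglyMeasurable.integral_kernel F.stronglyMeasurable.integral_kernel
    (fun ω => norm_integral_le_of_forall_norm_le _ hF)
    (fun ω => norm_integral_le_of_forall_norm_le _ hF)

end KernelMeanEmbedding

theorem stmt_1_general
    {X : Type*} [MeasurableSpace X]
    {k : X → X → ℝ} (hk : IsKernel k)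
    {H : Type*} [NormedAddCommGroup H] [InnerProductSpace ℝ H] [CompleteSpace H]
    (F : FeatureMap k H)
    {Ω : Type*} [MeasurableSpace Ω] (Pr : Measure Ω) [IsProbabilityMeasure Pr]
    (P₁ P₂ : Ω → Measure X)
    (hP₁ : ∀ ω, IsProbabilityMeasure (P₁ ω)) (hP₂ : ∀ ω, IsProbabilityMeasure (P₂ ω))
    (hP₁m : Measurable P₁) (hP₂m : Measurable P₂)
    -- a random variable `Z` on the same probability space
    {S : Type*} [MeasurableSpace S] (Z : Ω → S) (hZ : Measurable Z)
    -- a regular conditional distribution of `Pr` given `Z`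
    (κ : S → Measure Ω) (hκm : Measurable κ)
    (hκp : ∀ s, IsProbabilityMeasure (κ s))
    (hκ : ∀ ⦃B : Set Ω⦄, MeasurableSet B → ∀ ⦃C : Set S⦄, MeasurableSet C →
      Pr (B ∩ Z ⁻¹' C) = ∫⁻ s in C, κ s B ∂(Pr.map Z)) :
    kerCov F Pr P₁ P₂ =
      (∫ s, kerCov F (κ s) P₁ P₂ ∂(Pr.map Z))
        + kerCov F (Pr.map Z) (fun s => (κ s).bind P₁) (fun s => (κ s).bind P₂) := by
  obtain ⟨C, hC⟩ := hk.bounded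
  have hF := F.norm_le_sqrt fun x => (le_abs_self _).trans (hC x x)
  have : IsProbabilityMeasure (Pr.map Z) := Measure.isProbabilityMeasure_map hZ.aemeasurable
  let K : Kernel S Ω := ⟨κ, hκm⟩
  let K₁ : Kernel Ω X := ⟨P₁, hP₁m⟩
  let K₂ : Kernel Ω X := ⟨P₂, hP₂m⟩
  have : IsMarkovKernel K := ⟨hκp⟩
  have : IsMarkovKernel K₁ := ⟨hP₁⟩
  have : IsMarkovKernel K₂ := ⟨hP₂⟩
  have hPr : K ∘ₘ Pr.map Z = Pr := by
    ext B hB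
    rw [Measure.bind_apply hB K.aemeasurable]
    simpa [K] using (hκ hB MeasurableSet.univ).symm
  calc kerCov F Pr P₁ P₂ = kerCov F (K ∘ₘ Pr.map Z) K₁ K₂ := by rw [hPr]; rfl
    _ = _ := kerCov_comp F hF K₁ K₂ K (Pr.map Z)

theorem stmt_1
    {X : Type*} [TopologicalSpace X] [PolishSpace X] [LocallyCompactSpace X]
    [MeasurableSpace X] [BorelSpace X]
    {k : X → X → ℝ} (hk : IsKernel k)
    {H : Type*} [NormedAddCommGroup H] [InnerProductSpace ℝ H] [CompleteSpace H]
    (F : FeatureMap k H)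
    {Ω : Type*} [MeasurableSpace Ω] (Pr : Measure Ω) [IsProbabilityMeasure Pr]
    (P₁ P₂ : Ω → Measure X)
    (hP₁ : ∀ ω, IsProbabilityMeasure (P₁ ω)) (hP₂ : ∀ ω, IsProbabilityMeasure (P₂ ω))
    (hP₁m : Measurable P₁) (hP₂m : Measurable P₂)
    -- a random variable `Z` on the same probability space
    {S : Type*} [MeasurableSpace S] (Z : Ω → S) (hZ : Measurable Z)
    -- a regular conditional distribution of `Pr` given `Z`
    (κ : S → Measure Ω) (hκm : Measurable κ)
    (hκp : ∀ s, IsProbabilityMeasure (κ s))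
    (hκ : ∀ ⦃B : Set Ω⦄, MeasurableSet B → ∀ ⦃C : Set S⦄, MeasurableSet C →
      Pr (B ∩ Z ⁻¹' C) = ∫⁻ s in C, κ s B ∂(Pr.map Z)) :
    kerCov F Pr P₁ P₂ =
      (∫ s, kerCov F (κ s) P₁ P₂ ∂(Pr.map Z))
        + kerCov F (Pr.map Z) (fun s => (κ s).bind P₁) (fun s => (κ s).bind P₂) :=
  stmt_1_general hk F Pr P₁ P₂ hP₁ hP₂ hP₁m hP₂m Z hZ κ hκm hκp hκ

end
end

section
/- For any random probability measure P̃ on X, the kernel variance satisfies Var_k(P̃) ≥ 0. If moreover the kernel k is characteristic, then Var_k(P̃) = 0 if and only if P̃ is deterministic, i.e., P̃ = P almost surely for some fixed probability measure P on X. -/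
open MeasureTheory ProbabilityTheory Filter
open scoped RealInnerProductSpace ENNReal NNReal

noncomputable section

/-- A kernel is characteristic if the kernel mean embedding
`μ ↦ (y ↦ ∫ k(x,y) dμ(x))` is injective on probability measures. -/
def IsCharacteristic {Z : Type*} [MeasurableSpace Z] (k : Z → Z → ℝ) : Prop :=
  ∀ μ₁ μ₂ : Measure Z, IsProbabilityMeasure μ₁ → IsProbabilityMeasure μ₂ →
    (∀ y, ∫ x, k x y ∂μ₁ = ∫ x, k x y ∂μ₂) → μ₁ = μ₂

/-! By the reproducing property the integral of `k(·, y)` against `μ` is `⟪μ_k(μ), F y⟫`, so a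
characteristic kernel makes `μ ↦ μ_k(μ)` injective on probability measures. The kernel variance
is the mean squared distance of `μ_k(P̃)` from its mean, hence nonnegative, and it vanishes exactly
when `μ_k(P̃)` is almost surely constant, i.e. when `P̃` is almost surely one fixed measure. -/

section Variance

variable {Ω E : Type*} [MeasurableSpace Ω] [NormedAddCommGroup E] [NormedSpace ℝ E]
  [CompleteSpace E]

theorem integral_norm_sub_integral_sq_eq_zero_iff (Pr : Measure Ω) [IsProbabilityMeasure Pr]
    {g : Ω → E} (hg : MemLp g 2 Pr) :
    ∫ ω, ‖g ω - ∫ ω', g ω' ∂Pr‖ ^ 2 ∂Pr = 0 ↔ ∃ c, ∀ᵐ ω ∂Pr, g ω = c := by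
  set m := ∫ ω, g ω ∂Pr
  constructor
  · intro h
    have hint : Integrable (fun ω => ‖g ω - m‖ ^ 2) Pr :=
      (hg.sub (memLp_const m)).integrable_norm_pow'
    have hzero := (integral_eq_zero_iff_of_nonneg (fun ω => sq_nonneg _) hint).1 h
    refine ⟨m, hzero.mono fun ω hω => ?_⟩
    simpa [sub_eq_zero] using hω
  · rintro ⟨c, hc⟩
    have hm : m = c := by simp [m, integral_congr_ae hc]
    exact integral_eq_zero_of_ae (hc.mono fun ω hω => by simp [hω, hm])

end Variance

namespace FeatureMap

variable {X H : Type*} [MeasurableSpace X] {k : X → X → ℝ}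
  [NormedAddCommGroup H] [InnerProductSpace ℝ H] (F : FeatureMap k H)

theorem norm_sq_apply (x : X) : ‖F.toFun x‖ ^ 2 = k x x := by
  rw [← F.repro, real_inner_self_eq_norm_sq]

theorem exists_norm_le (hk : ∃ C, ∀ x y, |k x y| ≤ C) : ∃ C, ∀ x, ‖F.toFun x‖ ≤ C := by
  obtain ⟨C, hC⟩ := hk
  refine ⟨√C, fun x => Real.le_sqrt_of_sq_le ?_⟩
  rw [norm_sq_apply]
  exact (abs_le.1 (hC x x)).2

theorem integrable (hk : ∃ C, ∀ x y, |k x y| ≤ C) (μ : Measure X) [IsFiniteMeasure μ] :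
    Integrable F.toFun μ := by
  obtain ⟨C, hC⟩ := F.exists_norm_le hk
  exact .of_bound F.stronglyMeasurable.aestronglyMeasurable C (.of_forall hC)

variable [CompleteSpace H]

theorem norm_meanEmb_le {C : ℝ} (hC : ∀ x, ‖F.toFun x‖ ≤ C) (μ : Measure X)
    [IsProbabilityMeasure μ] : ‖meanEmb F μ‖ ≤ C := by
  simpa [meanEmb] using norm_integral_le_of_norm_le_const (μ := μ) (.of_forall hC)

theorem integral_kernel_eq_inner_meanEmb {μ : Measure X} (hμ : Integrable F.toFun μ) (y : X) :
    ∫ x, k x y ∂μ = ⟪meanEmb F μ, F.toFun y⟫ := by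
  rw [meanEmb, real_inner_comm, ← integral_inner hμ]
  congr 1 with x
  rw [← F.repro, real_inner_comm]

theorem eq_of_meanEmb_eq (hk : ∃ C, ∀ x y, |k x y| ≤ C) (hchar : IsCharacteristic k)
    {μ ν : Measure X} [IsProbabilityMeasure μ] [IsProbabilityMeasure ν]
    (h : meanEmb F μ = meanEmb F ν) : μ = ν :=
  hchar μ ν ‹_› ‹_› fun y => by
    rw [F.integral_kernel_eq_inner_meanEmb (F.integrable hk μ),
      F.integral_kernel_eq_inner_meanEmb (F.integrable hk ν), h]

theorem stronglyMeasurable_meanEmb {Ω : Type*} [MeasurableSpace Ω] (κ : Kernel Ω X)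
    [IsSFiniteKernel κ] : StronglyMeasurable fun ω => meanEmb F (κ ω) :=
  (F.stronglyMeasurable.comp_measurable measurable_snd).integral_kernel_prod_right
    (f := fun _ x => F.toFun x)

theorem memLp_meanEmb (hk : ∃ C, ∀ x y, |k x y| ≤ C) {Ω : Type*} [MeasurableSpace Ω]
    (Pr : Measure Ω) [IsFiniteMeasure Pr] (κ : Kernel Ω X) [IsMarkovKernel κ] (p : ℝ≥0∞) :
    MemLp (fun ω => meanEmb F (κ ω)) p Pr := by
  obtain ⟨C, hC⟩ := F.exists_norm_le hk
  exact .of_bound (F.stronglyMeasurable_meanEmb κ).aestronglyMeasurable C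
    (.of_forall fun ω => F.norm_meanEmb_le hC (κ ω))

end FeatureMap

section KernelVariance

variable {X H Ω : Type*} [MeasurableSpace X] {k : X → X → ℝ}
  [NormedAddCommGroup H] [InnerProductSpace ℝ H] [CompleteSpace H] [MeasurableSpace Ω]
  (F : FeatureMap k H) (Pr : Measure Ω) (P : Ω → Measure X)

theorem kerVar_eq_integral_norm_sq :
    kerVar F Pr P = ∫ ω, ‖meanEmb F (P ω) - ∫ ω', meanEmb F (P ω') ∂Pr‖ ^ 2 ∂Pr := by
  simp only [kerVar, kerCov, real_inner_self_eq_norm_sq]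

theorem kerVar_nonneg : 0 ≤ kerVar F Pr P := by
  rw [kerVar_eq_integral_norm_sq]
  exact integral_nonneg fun ω => sq_nonneg _

end KernelVariance

theorem stmt_2_general
    {X : Type*} [MeasurableSpace X]
    {k : X → X → ℝ} (hk : IsKernel k)
    {H : Type*} [NormedAddCommGroup H] [InnerProductSpace ℝ H] [CompleteSpace H]
    (F : FeatureMap k H)
    {Ω : Type*} [MeasurableSpace Ω] (Pr : Measure Ω) [IsProbabilityMeasure Pr]
    (P : Ω → Measure X)
    (hP : ∀ ω, IsProbabilityMeasure (P ω)) (hPm : Measurable P) :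
    0 ≤ kerVar F Pr P ∧
      (IsCharacteristic k →
        (kerVar F Pr P = 0 ↔
          ∃ Q : Measure X, IsProbabilityMeasure Q ∧ ∀ᵐ ω ∂Pr, P ω = Q)) := by
  refine ⟨kerVar_nonneg F Pr P, fun hchar => ?_⟩
  let κ : Kernel Ω X := ⟨P, hPm⟩
  have : IsMarkovKernel κ := ⟨hP⟩
  rw [kerVar_eq_integral_norm_sq, integral_norm_sub_integral_sq_eq_zero_iff Pr
    (g := fun ω => meanEmb F (P ω)) (F.memLp_meanEmb hk.bounded Pr κ 2)]
  constructor
  · rintro ⟨c, hc⟩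
    obtain ⟨ω₀, hω₀⟩ := hc.exists
    refine ⟨P ω₀, hP ω₀, hc.mono fun ω hω => ?_⟩
    have := hP ω
    have := hP ω₀
    exact F.eq_of_meanEmb_eq hk.bounded hchar (hω.trans hω₀.symm)
  · rintro ⟨Q, -, hQ⟩
    exact ⟨meanEmb F Q, hQ.mono fun ω hω => congrArg (meanEmb F) hω⟩

theorem stmt_2
    {X : Type*} [TopologicalSpace X] [PolishSpace X] [LocallyCompactSpace X]
    [MeasurableSpace X] [BorelSpace X]
    {k : X → X → ℝ} (hk : IsKernel k)
    {H : Type*} [NormedAddCommGroup H] [InnerProductSpace ℝ H] [CompleteSpace H]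
    (F : FeatureMap k H)
    {Ω : Type*} [MeasurableSpace Ω] (Pr : Measure Ω) [IsProbabilityMeasure Pr]
    (P : Ω → Measure X)
    (hP : ∀ ω, IsProbabilityMeasure (P ω)) (hPm : Measurable P) :
    0 ≤ kerVar F Pr P ∧
      (IsCharacteristic k →
        (kerVar F Pr P = 0 ↔
          ∃ Q : Measure X, IsProbabilityMeasure Q ∧ ∀ᵐ ω ∂Pr, P ω = Q)) :=
  stmt_2_general hk F Pr P hP hPm

end
end

section
/- For i = 1,2, let P̃ᵢ be an almost surely discrete random probability measure on X such that the mean measure E[P̃ᵢ] is atomless, and assume Var_k(P̃ᵢ) > 0. If the kernel k is c₀-universal, then Corr_k(P̃₁,P̃₂) = 1 if and only if P̃₁ = P̃₂ almost surely. -/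
open MeasureTheory ProbabilityTheory Filter
open scoped RealInnerProductSpace ENNReal NNReal

noncomputable section

/-- A kernel vanishes at infinity (is `c₀`). -/
def IsC0Kernel {Z : Type*} [TopologicalSpace Z] (k : Z → Z → ℝ) : Prop :=
  ∀ ε : ℝ, 0 < ε → ∀ y : Z, IsCompact {x : Z | ε ≤ |k x y|}

/-- The kernel mean embedding of a bounded signed measure,
`μ_k(ξ)(y) = ∫ k(x,y) dξ(x)`, via the Jordan decomposition. -/
def signedMeanEmb {Z : Type*} [MeasurableSpace Z] (k : Z → Z → ℝ)
    (ξ : SignedMeasure Z) : Z → ℝ := fun y =>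
  (∫ x, k x y ∂ξ.toJordanDecomposition.posPart)
    - ∫ x, k x y ∂ξ.toJordanDecomposition.negPart

/-- A kernel is `c₀`-universal if it is `c₀` and its kernel mean embedding is injective
on the space of bounded signed measures. -/
def IsC0Universal {Z : Type*} [TopologicalSpace Z] [MeasurableSpace Z]
    (k : Z → Z → ℝ) : Prop :=
  IsC0Kernel k ∧ Function.Injective (signedMeanEmb k)

/-- A measure is discrete (purely atomic) if it is carried by a countable set. -/
def IsDiscreteMeasure {Z : Type*} [MeasurableSpace Z] (μ : Measure Z) : Prop :=
  ∃ S : Set Z, S.Countable ∧ μ Sᶜ = 0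

/-!
Centre the mean embeddings, `u i ω = μ_k(P̃ᵢ ω) - E[μ_k(P̃ᵢ)]`. Then `Corr_k(P̃₁, P̃₂)` is the
cosine of the angle between `u 1` and `u 2` in `L²(Ω; H_k)`, so correlation one means
`u 2 = r • u 1` almost surely for some `r > 0`, i.e.
`μ_k(P̃₂ ω + r E[P̃₁]) = μ_k(r P̃₁ ω + E[P̃₂])`. By universality these two measures agree.
Restricting them to a countable set carrying both `P̃₁ ω` and `P̃₂ ω`, which the atomless mean
measures do not charge, gives `P̃₂ ω = r P̃₁ ω`, whence `r = 1`.
-/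

section MeanEmbedding

variable {X : Type*} [MeasurableSpace X] {k : X → X → ℝ}
  {H : Type*} [NormedAddCommGroup H] [InnerProductSpace ℝ H]

lemma IsKernel.integrable_left (hk : IsKernel k) (μ : Measure X) [IsFiniteMeasure μ] (y : X) :
    Integrable (fun x => k x y) μ := by
  obtain ⟨C, hC⟩ := hk.bounded
  exact .of_bound (hk.measurable.comp measurable_prodMk_right).aestronglyMeasurable C
    (.of_forall fun x => hC x y)

lemma FeatureMap.exists_norm_le_s5 (hk : IsKernel k) (F : FeatureMap k H) :
    ∃ B : ℝ, ∀ x, ‖F.toFun x‖ ≤ B := by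
  obtain ⟨C, hC⟩ := hk.bounded
  refine ⟨√C, fun x => ?_⟩
  rw [← Real.sqrt_sq (norm_nonneg _), ← real_inner_self_eq_norm_sq, F.repro]
  exact Real.sqrt_le_sqrt ((le_abs_self _).trans (hC x x))

lemma FeatureMap.integrable_s5 (hk : IsKernel k) (F : FeatureMap k H) (μ : Measure X)
    [IsFiniteMeasure μ] : Integrable F.toFun μ := by
  obtain ⟨B, hB⟩ := F.exists_norm_le_s5 hk
  exact .of_bound F.stronglyMeasurable.aestronglyMeasurable B (.of_forall hB)

variable [CompleteSpace H]

lemma inner_meanEmb (hk : IsKernel k) (F : FeatureMap k H) (μ : Measure X) [IsFiniteMeasure μ]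
    (y : X) : ⟪meanEmb F μ, F.toFun y⟫ = ∫ x, k x y ∂μ := by
  rw [real_inner_comm, meanEmb, ← integral_inner (F.integrable_s5 hk μ)]
  exact integral_congr_ae (.of_forall fun x => (real_inner_comm _ _).trans (F.repro x y))

lemma meanEmb_add (hk : IsKernel k) (F : FeatureMap k H) (μ ν : Measure X) [IsFiniteMeasure μ]
    [IsFiniteMeasure ν] : meanEmb F (μ + ν) = meanEmb F μ + meanEmb F ν :=
  integral_add_measure (F.integrable_s5 hk μ) (F.integrable_s5 hk ν)

lemma meanEmb_smul (F : FeatureMap k H) (c : ℝ≥0) (μ : Measure X) :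
    meanEmb F (c • μ) = (c : ℝ) • meanEmb F μ :=
  integral_smul_nnreal_measure _ c

lemma signedMeanEmb_sub (hk : IsKernel k) (μ ν : Measure X) [IsFiniteMeasure μ]
    [IsFiniteMeasure ν] (y : X) :
    signedMeanEmb k (μ.toSignedMeasure - ν.toSignedMeasure) y
      = (∫ x, k x y ∂μ) - ∫ x, k x y ∂ν := by
  set j := (μ.toSignedMeasure - ν.toSignedMeasure).toJordanDecomposition
  have hj : j.posPart + ν = μ + j.negPart := by
    rw [← Measure.toSignedMeasure_eq_toSignedMeasure_iff, Measure.toSignedMeasure_add,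
      Measure.toSignedMeasure_add, ← sub_eq_sub_iff_add_eq_add]
    exact SignedMeasure.toSignedMeasure_toJordanDecomposition _
  have hint := congrArg (fun ρ => ∫ x, k x y ∂ρ) hj
  simp only [integral_add_measure (hk.integrable_left _ y) (hk.integrable_left _ y)] at hint
  simp only [signedMeanEmb]
  linarith

lemma eq_of_meanEmb_eq (hk : IsKernel k) (hinj : Function.Injective (signedMeanEmb k))
    (F : FeatureMap k H) {μ ν : Measure X} [IsFiniteMeasure μ] [IsFiniteMeasure ν]
    (h : meanEmb F μ = meanEmb F ν) : μ = ν := by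
  have hsigned : signedMeanEmb k (μ.toSignedMeasure - ν.toSignedMeasure) = signedMeanEmb k 0 := by
    ext y
    rw [signedMeanEmb_sub hk, ← inner_meanEmb hk F, ← inner_meanEmb hk F, h, sub_self]
    simp [signedMeanEmb, SignedMeasure.toJordanDecomposition_zero]
  exact Measure.toSignedMeasure_eq_toSignedMeasure_iff.mp (sub_eq_zero.mp (hinj hsigned))

lemma add_smul_eq_smul_add_of_meanEmb (hk : IsKernel k)
    (hinj : Function.Injective (signedMeanEmb k)) (F : FeatureMap k H)
    {μ₁ μ₂ ν₁ ν₂ : Measure X} [IsFiniteMeasure μ₁] [IsFiniteMeasure μ₂] [IsFiniteMeasure ν₁]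
    [IsFiniteMeasure ν₂] {c : ℝ≥0}
    (h : meanEmb F μ₂ - meanEmb F ν₂ = (c : ℝ) • (meanEmb F μ₁ - meanEmb F ν₁)) :
    μ₂ + c • ν₁ = c • μ₁ + ν₂ := by
  refine eq_of_meanEmb_eq hk hinj F ?_
  rw [meanEmb_add hk, meanEmb_add hk, meanEmb_smul, meanEmb_smul]
  exact sub_eq_sub_iff_add_eq_add.mp (h.trans (smul_sub _ _ _))

end MeanEmbedding

section L2

variable {Ω : Type*} [MeasurableSpace Ω] {μ : Measure Ω}
  {H : Type*} [NormedAddCommGroup H] [InnerProductSpace ℝ H]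

lemma MeasureTheory.MemLp.inner_toLp_toLp {u v : Ω → H} (hu : MemLp u 2 μ) (hv : MemLp v 2 μ) :
    ⟪hu.toLp u, hv.toLp v⟫ = ∫ ω, ⟪u ω, v ω⟫ ∂μ := by
  rw [L2.inner_def]
  refine integral_congr_ae ?_
  filter_upwards [hu.coeFn_toLp, hv.coeFn_toLp] with ω hu hv
  rw [hu, hv]

lemma MeasureTheory.MemLp.sqrt_integral_inner_self {u : Ω → H} (hu : MemLp u 2 μ) :
    √(∫ ω, ⟪u ω, u ω⟫ ∂μ) = ‖hu.toLp u‖ := by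
  rw [← hu.inner_toLp_toLp hu, real_inner_self_eq_norm_sq, Real.sqrt_sq (norm_nonneg _)]

lemma integral_inner_div_eq_one_iff {u v : Ω → H} (hu : MemLp u 2 μ) (hv : MemLp v 2 μ) :
    (∫ ω, ⟪u ω, v ω⟫ ∂μ) / (√(∫ ω, ⟪u ω, u ω⟫ ∂μ) * √(∫ ω, ⟪v ω, v ω⟫ ∂μ)) = 1 ↔
      ¬u =ᵐ[μ] 0 ∧ ∃ r : ℝ, 0 < r ∧ v =ᵐ[μ] r • u := by
  have hzero : hu.toLp u = 0 ↔ u =ᵐ[μ] 0 := by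
    rw [Lp.eq_zero_iff_ae_eq_zero]
    exact ⟨hu.coeFn_toLp.symm.trans, hu.coeFn_toLp.trans⟩
  have hsmul (r : ℝ) : hv.toLp v = r • hu.toLp u ↔ v =ᵐ[μ] r • u := by
    rw [← MemLp.toLp_const_smul, MemLp.toLp_eq_toLp_iff]
  rw [← hu.inner_toLp_toLp hv, hu.sqrt_integral_inner_self, hv.sqrt_integral_inner_self,
    real_inner_div_norm_mul_norm_eq_one_iff, Ne, hzero]
  simp only [hsmul]

end L2

section RandomMeasure

variable {X : Type*} [MeasurableSpace X] {k : X → X → ℝ}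
  {H : Type*} [NormedAddCommGroup H] [InnerProductSpace ℝ H] [CompleteSpace H]
  {Ω : Type*} [MeasurableSpace Ω] {P : Ω → Measure X}

def centeredMeanEmb (F : FeatureMap k H) (Pr : Measure Ω) (P : Ω → Measure X) (ω : Ω) : H :=
  meanEmb F (P ω) - ∫ ω', meanEmb F (P ω') ∂Pr

lemma norm_meanEmb_le (F : FeatureMap k H) {B : ℝ} (hB : ∀ x, ‖F.toFun x‖ ≤ B)
    (μ : Measure X) [IsProbabilityMeasure μ] : ‖meanEmb F μ‖ ≤ B := by
  simpa [meanEmb] using norm_integral_le_of_norm_le_const (μ := μ) (.of_forall hB)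

lemma stronglyMeasurable_meanEmb (F : FeatureMap k H) (hPm : Measurable P) :
    StronglyMeasurable fun ω => meanEmb F (P ω) :=
  F.stronglyMeasurable.integral_kernel (κ := ⟨P, hPm⟩)

lemma memLp_centeredMeanEmb (hk : IsKernel k) (F : FeatureMap k H) (Pr : Measure Ω)
    [IsFiniteMeasure Pr] (hPm : Measurable P) (hP : ∀ ω, IsProbabilityMeasure (P ω)) :
    MemLp (centeredMeanEmb F Pr P) 2 Pr := by
  obtain ⟨B, hB⟩ := F.exists_norm_le_s5 hk
  refine .sub (.of_bound (stronglyMeasurable_meanEmb F hPm).aestronglyMeasurable B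
    (.of_forall fun ω => norm_meanEmb_le F hB (P ω))) (memLp_const _)

lemma integral_meanEmb (hk : IsKernel k) (F : FeatureMap k H) (Pr : Measure Ω)
    [IsProbabilityMeasure Pr] (hPm : Measurable P) (hP : ∀ ω, IsProbabilityMeasure (P ω)) :
    ∫ ω, meanEmb F (P ω) ∂Pr = meanEmb F (Pr.bind P) := by
  let κ : Kernel Ω X := ⟨P, hPm⟩
  have : IsMarkovKernel κ := ⟨hP⟩
  exact (Kernel.integral_comp (κ := Kernel.const Unit Pr) (η := κ) (a := ())
    (F.integrable_s5 hk _)).symm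

lemma centeredMeanEmb_congr_ae (F : FeatureMap k H) {Pr : Measure Ω} {P₁ P₂ : Ω → Measure X}
    (h : P₁ =ᵐ[Pr] P₂) : centeredMeanEmb F Pr P₁ =ᵐ[Pr] centeredMeanEmb F Pr P₂ := by
  have hmean := integral_congr_ae (h.fun_comp (meanEmb F))
  filter_upwards [h] with ω hω
  simp only [centeredMeanEmb, Function.comp_apply] at hmean ⊢
  rw [hω, hmean]

lemma kerVar_eq_zero_of_centeredMeanEmb_ae_eq_zero (F : FeatureMap k H) {Pr : Measure Ω}
    (h : centeredMeanEmb F Pr P =ᵐ[Pr] 0) : kerVar F Pr P = 0 := by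
  refine integral_eq_zero_of_ae ?_
  filter_upwards [h] with ω hω
  change ⟪centeredMeanEmb F Pr P ω, centeredMeanEmb F Pr P ω⟫ = 0
  rw [hω, Pi.zero_apply, inner_zero_left]

lemma kerCorr_eq_one_iff (hk : IsKernel k) (F : FeatureMap k H) (Pr : Measure Ω)
    [IsFiniteMeasure Pr] {P₁ P₂ : Ω → Measure X} (hP₁m : Measurable P₁)
    (hP₁ : ∀ ω, IsProbabilityMeasure (P₁ ω)) (hP₂m : Measurable P₂)
    (hP₂ : ∀ ω, IsProbabilityMeasure (P₂ ω)) :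
    kerCorr F Pr P₁ P₂ = 1 ↔ ¬centeredMeanEmb F Pr P₁ =ᵐ[Pr] 0 ∧
      ∃ r : ℝ, 0 < r ∧ centeredMeanEmb F Pr P₂ =ᵐ[Pr] r • centeredMeanEmb F Pr P₁ :=
  integral_inner_div_eq_one_iff (memLp_centeredMeanEmb hk F Pr hP₁m hP₁)
    (memLp_centeredMeanEmb hk F Pr hP₂m hP₂)

end RandomMeasure

lemma eq_of_add_smul_eq_smul_add {X : Type*} [MeasurableSpace X] {p₁ p₂ q₁ q₂ : Measure X}
    [IsProbabilityMeasure p₁] [IsProbabilityMeasure p₂]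
    (hp₁ : IsDiscreteMeasure p₁) (hp₂ : IsDiscreteMeasure p₂)
    (hq₁ : ∀ z, q₁ {z} = 0) (hq₂ : ∀ z, q₂ {z} = 0) {c : ℝ≥0}
    (h : p₂ + c • q₁ = c • p₁ + q₂) : p₁ = p₂ := by
  obtain ⟨S₁, hS₁, hp₁S₁⟩ := hp₁
  obtain ⟨S₂, hS₂, hp₂S₂⟩ := hp₂
  have : NullSingletonClass q₁ := ⟨hq₁⟩
  have : NullSingletonClass q₂ := ⟨hq₂⟩
  have hS : (S₁ ∪ S₂).Countable := hS₁.union hS₂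
  have hq₁S : q₁.restrict (S₁ ∪ S₂) = 0 := Measure.restrict_eq_zero.2 (hS.measure_zero q₁)
  have hq₂S : q₂.restrict (S₁ ∪ S₂) = 0 := Measure.restrict_eq_zero.2 (hS.measure_zero q₂)
  have hp₁S : p₁.restrict (S₁ ∪ S₂) = p₁ := Measure.restrict_eq_self_of_ae_mem
    (measure_mono_null (Set.compl_subset_compl.2 Set.subset_union_left) hp₁S₁)
  have hp₂S : p₂.restrict (S₁ ∪ S₂) = p₂ := Measure.restrict_eq_self_of_ae_mem
    (measure_mono_null (Set.compl_subset_compl.2 Set.subset_union_right) hp₂S₂)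
  have hc : p₂ = c • p₁ := by
    simpa [Measure.restrict_smul, hq₁S, hq₂S, hp₁S, hp₂S] using
      congrArg (·.restrict (S₁ ∪ S₂)) h
  have hc1 : 1 = c := by
    simpa using congrArg (· Set.univ) hc
  rw [hc, ← hc1, one_smul]

theorem stmt_5_general
    {X : Type*} [TopologicalSpace X]
    [MeasurableSpace X]
    {k : X → X → ℝ} (hk : IsKernel k) (hk0 : IsC0Universal k)
    {H : Type*} [NormedAddCommGroup H] [InnerProductSpace ℝ H] [CompleteSpace H]
    (F : FeatureMap k H)
    {Ω : Type*} [MeasurableSpace Ω] (Pr : Measure Ω) [IsProbabilityMeasure Pr]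
    (P₁ P₂ : Ω → Measure X)
    (hP₁ : ∀ ω, IsProbabilityMeasure (P₁ ω)) (hP₂ : ∀ ω, IsProbabilityMeasure (P₂ ω))
    (hP₁m : Measurable P₁) (hP₂m : Measurable P₂)
    -- almost surely discrete random probabilities
    (hd₁ : ∀ᵐ ω ∂Pr, IsDiscreteMeasure (P₁ ω))
    (hd₂ : ∀ᵐ ω ∂Pr, IsDiscreteMeasure (P₂ ω))
    -- atomless mean measures
    (ha₁ : ∀ z : X, Pr.bind P₁ {z} = 0) (ha₂ : ∀ z : X, Pr.bind P₂ {z} = 0)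
    (hV₁ : 0 < kerVar F Pr P₁) :
    kerCorr F Pr P₁ P₂ = 1 ↔ ∀ᵐ ω ∂Pr, P₁ ω = P₂ ω := by
  have : IsProbabilityMeasure (Pr.bind P₁) :=
    isProbabilityMeasure_bind hP₁m.aemeasurable (.of_forall hP₁)
  have : IsProbabilityMeasure (Pr.bind P₂) :=
    isProbabilityMeasure_bind hP₂m.aemeasurable (.of_forall hP₂)
  rw [kerCorr_eq_one_iff hk F Pr hP₁m hP₁ hP₂m hP₂]
  constructor
  · rintro ⟨-, r, hr, hu⟩
    filter_upwards [hu, hd₁, hd₂] with ω hω hd₁ω hd₂ω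
    refine eq_of_add_smul_eq_smul_add hd₁ω hd₂ω ha₁ ha₂
      (add_smul_eq_smul_add_of_meanEmb hk hk0.2 F (c := r.toNNReal) ?_)
    simpa [centeredMeanEmb, integral_meanEmb hk F Pr hP₁m hP₁, integral_meanEmb hk F Pr hP₂m hP₂,
      Real.coe_toNNReal _ hr.le] using hω
  · intro h
    refine ⟨fun h₀ => hV₁.ne' (kerVar_eq_zero_of_centeredMeanEmb_ae_eq_zero F h₀), 1, one_pos, ?_⟩
    simpa using (centeredMeanEmb_congr_ae F h).symm

theorem stmt_5
    {X : Type*} [TopologicalSpace X] [PolishSpace X] [LocallyCompactSpace X]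
    [MeasurableSpace X] [BorelSpace X]
    {k : X → X → ℝ} (hk : IsKernel k) (hk0 : IsC0Universal k)
    {H : Type*} [NormedAddCommGroup H] [InnerProductSpace ℝ H] [CompleteSpace H]
    (F : FeatureMap k H)
    {Ω : Type*} [MeasurableSpace Ω] (Pr : Measure Ω) [IsProbabilityMeasure Pr]
    (P₁ P₂ : Ω → Measure X)
    (hP₁ : ∀ ω, IsProbabilityMeasure (P₁ ω)) (hP₂ : ∀ ω, IsProbabilityMeasure (P₂ ω))
    (hP₁m : Measurable P₁) (hP₂m : Measurable P₂)
    -- almost surely discrete random probabilities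
    (hd₁ : ∀ᵐ ω ∂Pr, IsDiscreteMeasure (P₁ ω))
    (hd₂ : ∀ᵐ ω ∂Pr, IsDiscreteMeasure (P₂ ω))
    -- atomless mean measures
    (ha₁ : ∀ z : X, Pr.bind P₁ {z} = 0) (ha₂ : ∀ z : X, Pr.bind P₂ {z} = 0)
    (hV₁ : 0 < kerVar F Pr P₁) (hV₂ : 0 < kerVar F Pr P₂) :
    kerCorr F Pr P₁ P₂ = 1 ↔ ∀ᵐ ω ∂Pr, P₁ ω = P₂ ω :=
  stmt_5_general hk hk0 F Pr P₁ P₂ hP₁ hP₂ hP₁m hP₂m hd₁ hd₂ ha₁ ha₂ hV₁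
end
end

section
/- For any measurable set A ⊆ X, the function k_A(x,y) := 1_A(x)·1_A(y) is a bounded, measurable, symmetric, positive-definite kernel, and for any random probability measures P̃₁, P̃₂ such that P̃₁(A) and P̃₂(A) are not deterministic, the kernel correlation with respect to k_A equals the set-wise Pearson correlation: Corr_{k_A}(P̃₁,P̃₂) = Corr(P̃₁(A), P̃₂(A)). -/
open MeasureTheory ProbabilityTheory Filter
open scoped RealInnerProductSpace ENNReal NNReal

noncomputable section

/-- The set-wise kernel `k_A(x,y) = 1_A(x) 1_A(y)`. -/
def setKernel {X : Type*} (A : Set X) : X → X → ℝ := fun x y =>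
  A.indicator (fun _ => (1 : ℝ)) x * A.indicator (fun _ => (1 : ℝ)) y

/-!
The kernel `k_A = 1_A ⊗ 1_A` has rank one, so every feature map of it is `x ↦ 1_A(x) • e` for a
unit vector `e` (namely `e = φ(x₀)` for any `x₀ ∈ A`). The mean embedding of `P` is then
`P(A) • e`, and the kernel covariance is the covariance of the set evaluations times `⟪e, e⟫ = 1`.
-/

section RankOne

variable {X : Type*} {f : X → ℝ}

theorem isPosDef_mul_self : IsPosDef fun x y => f x * f y := by
  intro n x c
  have hsq : ∑ i, ∑ j, c i * c j * (f (x i) * f (x j))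
      = (∑ i, c i * f (x i)) * (∑ j, c j * f (x j)) := by
    rw [Finset.sum_mul_sum]
    refine Finset.sum_congr rfl fun i _ => Finset.sum_congr rfl fun j _ => ?_
    ring
  exact hsq ▸ mul_self_nonneg _

variable [MeasurableSpace X]

theorem isKernel_mul_self (hf : Measurable f) (hbdd : ∃ C, ∀ x, |f x| ≤ C) :
    IsKernel fun x y => f x * f y := by
  obtain ⟨C, hC⟩ := hbdd
  refine ⟨(hf.comp measurable_fst).mul (hf.comp measurable_snd), ⟨C * C, fun x y => ?_⟩,
    fun x y => mul_comm _ _, isPosDef_mul_self⟩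
  rw [abs_mul]
  exact mul_le_mul (hC x) (hC y) (abs_nonneg _) ((abs_nonneg _).trans (hC x))

variable {H : Type*} [NormedAddCommGroup H] [InnerProductSpace ℝ H]

theorem FeatureMap.exists_toFun_eq_smul (F : FeatureMap (fun x y => f x * f y) H)
    (hf : ∃ x₀, f x₀ ≠ 0) : ∃ e : H, ⟪e, e⟫ = 1 ∧ F.toFun = fun x => f x • e := by
  obtain ⟨x₀, hx₀⟩ := hf
  set e := (f x₀)⁻¹ • F.toFun x₀
  have hFe : ∀ x, ⟪F.toFun x, e⟫ = f x := fun x => by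
    rw [real_inner_smul_right, F.repro]
    field_simp
  have hee : ⟪e, e⟫ = 1 := by
    rw [real_inner_smul_left, hFe]
    field_simp
  clear_value e
  refine ⟨e, hee, funext fun x => sub_eq_zero.mp (inner_self_eq_zero (𝕜 := ℝ).mp ?_)⟩
  simp only [inner_sub_left, inner_sub_right, real_inner_smul_left, real_inner_smul_right,
    real_inner_comm (F.toFun x) e, F.repro, hFe, hee]
  ring

end RankOne

section FeatureLine

variable {X : Type*} [MeasurableSpace X] {k : X → X → ℝ}
  {H : Type*} [NormedAddCommGroup H] [InnerProductSpace ℝ H] [CompleteSpace H]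
  {Ω : Type*} [MeasurableSpace Ω]
  {F : FeatureMap k H} {f : X → ℝ} {e : H}

theorem meanEmb_of_toFun_eq_smul (hF : F.toFun = fun x => f x • e) (μ : Measure X) :
    meanEmb F μ = (∫ x, f x ∂μ) • e := by
  rw [meanEmb, hF, integral_smul_const]

theorem kerCov_of_toFun_eq_smul (hF : F.toFun = fun x => f x • e) (Pr : Measure Ω)
    (P₁ P₂ : Ω → Measure X) :
    kerCov F Pr P₁ P₂
      = rCov Pr (fun ω => ∫ x, f x ∂P₁ ω) (fun ω => ∫ x, f x ∂P₂ ω) * ⟪e, e⟫ := by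
  simp only [kerCov, rCov, meanEmb_of_toFun_eq_smul hF, integral_smul_const, ← sub_smul,
    real_inner_smul_left, real_inner_smul_right, ← integral_mul_const]
  exact integral_congr_ae (.of_forall fun ω => by ring)

theorem kerCorr_of_toFun_eq_smul (hF : F.toFun = fun x => f x • e) (he : ⟪e, e⟫ = 1)
    (Pr : Measure Ω) (P₁ P₂ : Ω → Measure X) :
    kerCorr F Pr P₁ P₂ = rCorr Pr (fun ω => ∫ x, f x ∂P₁ ω) (fun ω => ∫ x, f x ∂P₂ ω) := by
  simp only [kerCorr, rCorr, kerVar, rVar, kerCov_of_toFun_eq_smul hF, he, mul_one]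

end FeatureLine

theorem isKernel_setKernel {X : Type*} [MeasurableSpace X] {A : Set X} (hA : MeasurableSet A) :
    IsKernel (setKernel A) :=
  isKernel_mul_self (f := A.indicator fun _ => 1) (measurable_const.indicator hA)
    ⟨1, fun x => by by_cases hx : x ∈ A <;> simp [hx]⟩

theorem stmt_10_general
    {X : Type*} [MeasurableSpace X]
    (A : Set X) (hA : MeasurableSet A)
    {H : Type*} [NormedAddCommGroup H] [InnerProductSpace ℝ H] [CompleteSpace H]
    (F : FeatureMap (setKernel A) H)
    {Ω : Type*} [MeasurableSpace Ω] (Pr : Measure Ω)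
    (P₁ P₂ : Ω → Measure X)
    -- `P̃₁(A)` and `P̃₂(A)` are not deterministic
    (hnd₁ : ¬ ∃ c : ℝ, ∀ᵐ ω ∂Pr, (P₁ ω A).toReal = c) :
    IsKernel (setKernel A) ∧
      kerCorr F Pr P₁ P₂
        = rCorr Pr (fun ω => (P₁ ω A).toReal) (fun ω => (P₂ ω A).toReal) := by
  obtain ⟨x₀, hx₀⟩ : A.Nonempty :=
    Set.nonempty_iff_ne_empty.2 fun hA₀ => hnd₁ ⟨0, .of_forall fun ω => by simp [hA₀]⟩
  obtain ⟨e, he, hF⟩ := FeatureMap.exists_toFun_eq_smul (f := A.indicator fun _ => 1) F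
    ⟨x₀, by simp [hx₀]⟩
  refine ⟨isKernel_setKernel hA, ?_⟩
  refine (kerCorr_of_toFun_eq_smul hF he Pr P₁ P₂).trans ?_
  simp only [← Pi.one_def, integral_indicator_one hA, measureReal_def]

theorem stmt_10
    {X : Type*} [TopologicalSpace X] [PolishSpace X] [LocallyCompactSpace X]
    [MeasurableSpace X] [BorelSpace X]
    (A : Set X) (hA : MeasurableSet A)
    {H : Type*} [NormedAddCommGroup H] [InnerProductSpace ℝ H] [CompleteSpace H]
    (F : FeatureMap (setKernel A) H)
    {Ω : Type*} [MeasurableSpace Ω] (Pr : Measure Ω) [IsProbabilityMeasure Pr]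
    (P₁ P₂ : Ω → Measure X)
    (hP₁ : ∀ ω, IsProbabilityMeasure (P₁ ω)) (hP₂ : ∀ ω, IsProbabilityMeasure (P₂ ω))
    (hP₁m : Measurable P₁) (hP₂m : Measurable P₂)
    -- `P̃₁(A)` and `P̃₂(A)` are not deterministic
    (hnd₁ : ¬ ∃ c : ℝ, ∀ᵐ ω ∂Pr, (P₁ ω A).toReal = c)
    (hnd₂ : ¬ ∃ c : ℝ, ∀ᵐ ω ∂Pr, (P₂ ω A).toReal = c) :
    IsKernel (setKernel A) ∧
      kerCorr F Pr P₁ P₂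
        = rCorr Pr (fun ω => (P₁ ω A).toReal) (fun ω => (P₂ ω A).toReal) :=
  stmt_10_general A hA F Pr P₁ P₂ hnd₁

end
end
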